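/- arXiv:1211.7057 — 2 statements merged into one kernel-verified Lean document; each statement's English description precedes it below -/
import Mathlib

section
/- If G is a left-compressed r-uniform hypergraph with optimal weighting x having k nonzero weights (minimal support), and E_{i\j} = ∅ for some 1 ≤ i < j ≤ k, then x_i = x_j. -/
/-!
Left-compression gives `E_{j\i} ⊆ E_{i\j}`, so `E_{i\j} = ∅` makes the links of `i` and `j`
away from `{i, j}` coincide. With all other weights fixed, `λ` is then
`a * b * P + (a + b) * Q + R` in `(a, b) = (x i, x j)`, with `P ≥ 0`. If `P = 0`, moving the
weight of `j` onto `i` keeps `λ` and shrinks the support, against minimality; if `P > 0`,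
replacing both weights by their mean raises `λ` by `(x i - x j) ^ 2 * P / 4`, so optimality
forces `x i = x j`.
-/

open Finset

/-- The evaluation of the Lagrangian polynomial of a hypergraph with edge set `E`
at a weighting `x`. -/
noncomputable def lagEval {n : ℕ} (E : Finset (Finset (Fin n))) (x : Fin n → ℝ) : ℝ :=
  ∑ e ∈ E, ∏ i ∈ e, x i

/-- A legal weighting: nonnegative entries summing to 1. -/
def IsLegal {n : ℕ} (x : Fin n → ℝ) : Prop :=
  (∀ i, 0 ≤ x i) ∧ ∑ i, x i = 1

/-- The Lagrangian of a hypergraph: supremum of the Lagrangian polynomial over the simplex. -/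
noncomputable def lagrangian {n : ℕ} (E : Finset (Finset (Fin n))) : ℝ :=
  sSup {v | ∃ x, IsLegal x ∧ lagEval E x = v}

/-- `E` is left-compressed: whenever the increasing enumeration of `f` is pointwise at most
that of an edge `e`, `f` is also an edge. -/
def LeftCompressed {n : ℕ} (E : Finset (Finset (Fin n))) : Prop :=
  ∀ e ∈ E, ∀ f : Finset (Fin n),
    List.Forall₂ (· ≤ ·) (f.sort (· ≤ ·)) (e.sort (· ≤ ·)) → f ∈ E

open Function

theorem List.orderedInsert_eq_cons {α : Type*} (r : α → α → Prop) [DecidableRel r] {a : α}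
    {l : List α} (h : ∀ b ∈ l, r a b) : l.orderedInsert r a = a :: l := by
  cases l with
  | nil => rfl
  | cons b l => exact orderedInsert_cons_of_le r l (h b mem_cons_self)

theorem List.forall₂_orderedInsert_of_le {α : Type*} [LinearOrder α] :
    ∀ {l : List α}, l.Pairwise (· ≤ ·) → ∀ {i j : α}, i ≤ j →
      Forall₂ (· ≤ ·) (l.orderedInsert (· ≤ ·) i) (l.orderedInsert (· ≤ ·) j)
  | [], _, i, j, hij => by simpa using hij
  | b :: l, hl, i, j, hij => by
    have hbl : ∀ c ∈ l, b ≤ c := (pairwise_cons.1 hl).1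
    by_cases hjb : j ≤ b
    · rw [orderedInsert_cons_of_le _ _ (hij.trans hjb), orderedInsert_cons_of_le _ _ hjb]
      exact .cons hij (forall₂_refl _)
    rw [orderedInsert_of_not_le _ _ hjb]
    by_cases hib : i ≤ b
    · rw [orderedInsert_cons_of_le _ _ hib]
      refine .cons hib ?_
      rw [← orderedInsert_eq_cons _ hbl]
      exact forall₂_orderedInsert_of_le hl.of_cons (le_of_not_ge hjb)
    · rw [orderedInsert_of_not_le _ _ hib]
      exact .cons le_rfl (forall₂_orderedInsert_of_le hl.of_cons hij)

theorem Finset.sort_insert_eq_orderedInsert {α : Type*} [LinearOrder α] {a : α} {s : Finset α}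
    (h : a ∉ s) :
    (insert a s).sort (· ≤ ·) = (s.sort (· ≤ ·)).orderedInsert (· ≤ ·) a := by
  refine List.Perm.eq_of_pairwise' (pairwise_sort _ _)
    ((pairwise_sort s (· ≤ ·)).orderedInsert _ _) ?_
  refine List.Perm.trans ?_ (List.perm_orderedInsert _ _ _).symm
  rw [← Multiset.coe_eq_coe, ← Multiset.cons_coe, sort_eq, sort_eq, insert_val,
    Multiset.ndinsert_of_notMem h]

variable {n : ℕ}

theorem LeftCompressed.insert_mem_of_le {E : Finset (Finset (Fin n))} (hlc : LeftCompressed E)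
    {i j : Fin n} (hij : i ≤ j) {A : Finset (Fin n)} (hi : i ∉ A) (hj : j ∉ A)
    (hjA : insert j A ∈ E) : insert i A ∈ E := by
  apply hlc _ hjA
  rw [sort_insert_eq_orderedInsert hi, sort_insert_eq_orderedInsert hj]
  exact List.forall₂_orderedInsert_of_le (pairwise_sort _ _) hij

theorem insert_mem_iff_of_diff_eq_empty {r : ℕ} {E : Finset (Finset (Fin n))}
    (hE : ∀ e ∈ E, e.card = r) (hlc : LeftCompressed E) {i j : Fin n} (hij : i < j)
    (hempty : (univ.powersetCard (r - 1)).filter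
        (fun A => i ∉ A ∧ j ∉ A ∧ insert i A ∈ E ∧ insert j A ∉ E) = ∅)
    (A : Finset (Fin n)) (hi : i ∉ A) (hj : j ∉ A) : insert i A ∈ E ↔ insert j A ∈ E := by
  refine ⟨fun hiA => ?_, hlc.insert_mem_of_le hij.le hi hj⟩
  by_contra hjA
  have hcard : A.card = r - 1 := by
    rw [← hE _ hiA, card_insert_of_notMem hi, Nat.add_sub_cancel]
  have hA : A ∈ (univ.powersetCard (r - 1)).filter
      (fun A => i ∉ A ∧ j ∉ A ∧ insert i A ∈ E ∧ insert j A ∉ E) :=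
    mem_filter.2 ⟨mem_powersetCard.2 ⟨subset_univ A, hcard⟩, hi, hj, hiA, hjA⟩
  exact notMem_empty A (hempty ▸ hA)

theorem lagEval_le_lagrangian (E : Finset (Finset (Fin n))) {y : Fin n → ℝ} (hy : IsLegal y) :
    lagEval E y ≤ lagrangian E := by
  refine le_csSup ⟨#E, ?_⟩ ⟨y, hy, rfl⟩
  rintro _ ⟨z, hz, rfl⟩
  have hz1 : ∀ v, z v ≤ 1 := fun v =>
    hz.2 ▸ single_le_sum (fun w _ => hz.1 w) (mem_univ v)
  calc lagEval E z ≤ ∑ _e ∈ E, (1 : ℝ) :=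
        sum_le_sum fun e _ => prod_le_one (fun v _ => hz.1 v) fun v _ => hz1 v
    _ = #E := by simp

theorem lagEval_update_update (E : Finset (Finset (Fin n))) (x : Fin n → ℝ) {i j : Fin n}
    (hij : i ≠ j) (a b : ℝ) :
    lagEval E (update (update x i a) j b) =
      a * b * ∑ e ∈ E with i ∈ e ∧ j ∈ e, ∏ v ∈ (e.erase j).erase i, x v
      + a * ∑ e ∈ E with i ∈ e ∧ j ∉ e, ∏ v ∈ e.erase i, x v
      + b * ∑ e ∈ E with i ∉ e ∧ j ∈ e, ∏ v ∈ e.erase j, x v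
      + ∑ e ∈ E with i ∉ e ∧ j ∉ e, ∏ v ∈ e, x v := by
  rw [lagEval, ← sum_filter_add_sum_filter_not E (i ∈ ·),
    ← sum_filter_add_sum_filter_not (E.filter (i ∈ ·)) (j ∈ ·),
    ← sum_filter_add_sum_filter_not (E.filter (i ∉ ·)) (j ∈ ·)]
  simp only [filter_filter]
  set y := update (update x i a) j b
  have hboth : ∀ e ∈ E.filter (fun e => i ∈ e ∧ j ∈ e), ∏ v ∈ e, y v =
      a * b * ∏ v ∈ (e.erase j).erase i, x v := fun e he => by
    obtain ⟨-, hi, hj⟩ := mem_filter.1 he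
    rw [prod_update_of_mem hj, sdiff_singleton_eq_erase,
      prod_update_of_mem (mem_erase.2 ⟨hij, hi⟩), sdiff_singleton_eq_erase]
    ring
  have honly_i : ∀ e ∈ E.filter (fun e => i ∈ e ∧ j ∉ e), ∏ v ∈ e, y v =
      a * ∏ v ∈ e.erase i, x v := fun e he => by
    obtain ⟨-, hi, hj⟩ := mem_filter.1 he
    rw [prod_update_of_notMem hj, prod_update_of_mem hi, sdiff_singleton_eq_erase]
  have honly_j : ∀ e ∈ E.filter (fun e => i ∉ e ∧ j ∈ e), ∏ v ∈ e, y v =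
      b * ∏ v ∈ e.erase j, x v := fun e he => by
    obtain ⟨-, hi, hj⟩ := mem_filter.1 he
    rw [prod_update_of_mem hj, sdiff_singleton_eq_erase,
      prod_update_of_notMem (fun h => hi (mem_of_mem_erase h))]
  have hneither : ∀ e ∈ E.filter (fun e => i ∉ e ∧ j ∉ e), ∏ v ∈ e, y v =
      ∏ v ∈ e, x v := fun e he => by
    obtain ⟨-, hi, hj⟩ := mem_filter.1 he
    rw [prod_update_of_notMem hj, prod_update_of_notMem hi]
  rw [sum_congr rfl hboth, sum_congr rfl honly_i, sum_congr rfl honly_j, sum_congr rfl hneither,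
    ← mul_sum, ← mul_sum, ← mul_sum]
  ring

section Link

variable {α β : Type*} [DecidableEq α] [AddCommMonoid β] {E : Finset (Finset α)} {i j : α}

theorem insert_erase_mem_filter (hij : i ≠ j)
    (hlink : ∀ A, i ∉ A → j ∉ A → insert i A ∈ E → insert j A ∈ E) {e : Finset α}
    (he : e ∈ E.filter (fun e => i ∈ e ∧ j ∉ e)) :
    insert j (e.erase i) ∈ E.filter (fun e => i ∉ e ∧ j ∈ e) := by
  obtain ⟨heE, hi, hj⟩ := mem_filter.1 he
  refine mem_filter.2 ⟨hlink _ (notMem_erase i e) (fun h => hj (mem_of_mem_erase h))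
    (by rwa [insert_erase hi]), ?_, mem_insert_self j _⟩
  rw [mem_insert, mem_erase]
  tauto

theorem sum_filter_erase_eq_of_insert_mem_iff (hij : i ≠ j)
    (hlink : ∀ A, i ∉ A → j ∉ A → (insert i A ∈ E ↔ insert j A ∈ E)) (f : Finset α → β) :
    ∑ e ∈ E with i ∈ e ∧ j ∉ e, f (e.erase i) = ∑ e ∈ E with i ∉ e ∧ j ∈ e, f (e.erase j) := by
  refine sum_nbij' (fun e => insert j (e.erase i)) (fun e => insert i (e.erase j))
    (fun e he => insert_erase_mem_filter hij (fun A hi hj => (hlink A hi hj).1) he)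
    (fun e he => ?_) (fun e he => ?_) (fun e he => ?_) (fun e he => ?_)
  · have := insert_erase_mem_filter hij.symm (fun A hj hi => (hlink A hi hj).2)
      (by simpa only [and_comm] using he)
    simpa only [and_comm] using this
  all_goals obtain ⟨-, hi, hj⟩ := mem_filter.1 he
  · rw [erase_insert fun h => hj (mem_of_mem_erase h), insert_erase hi]
  · rw [erase_insert fun h => hi (mem_of_mem_erase h), insert_erase hj]
  · rw [erase_insert fun h => hj (mem_of_mem_erase h)]

end Link

theorem exists_lagEval_update_update_eq (E : Finset (Finset (Fin n))) {x : Fin n → ℝ}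
    (hx : ∀ v, 0 ≤ x v) {i j : Fin n} (hij : i ≠ j)
    (hlink : ∀ A, i ∉ A → j ∉ A → (insert i A ∈ E ↔ insert j A ∈ E)) :
    ∃ P Q R : ℝ, 0 ≤ P ∧
      ∀ a b, lagEval E (update (update x i a) j b) = a * b * P + (a + b) * Q + R := by
  refine ⟨∑ e ∈ E with i ∈ e ∧ j ∈ e, ∏ v ∈ (e.erase j).erase i, x v,
    ∑ e ∈ E with i ∉ e ∧ j ∈ e, ∏ v ∈ e.erase j, x v, ∑ e ∈ E with i ∉ e ∧ j ∉ e, ∏ v ∈ e, x v,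
    sum_nonneg fun e _ => prod_nonneg fun v _ => hx v, fun a b => ?_⟩
  rw [lagEval_update_update E x hij,
    sum_filter_erase_eq_of_insert_mem_iff hij hlink fun A => ∏ v ∈ A, x v]
  ring

theorem isLegal_update_update {x : Fin n → ℝ} (hx : IsLegal x) {i j : Fin n} (hij : i ≠ j)
    {a b : ℝ} (ha : 0 ≤ a) (hb : 0 ≤ b) (hab : a + b = x i + x j) :
    IsLegal (update (update x i a) j b) := by
  have hi : i ∈ univ \ {j} := by simp [hij]
  refine ⟨fun v => ?_, ?_⟩
  · simp only [update_apply]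
    split_ifs
    exacts [hb, ha, hx.1 v]
  · have hsum := hx.2
    rw [sum_eq_add_sum_sdiff_singleton_of_mem (mem_univ j),
      sum_eq_add_sum_sdiff_singleton_of_mem hi] at hsum
    rw [sum_update_of_mem (mem_univ j), sum_update_of_mem hi]
    linarith

theorem card_support_update_update_zero_lt {ι M : Type*} [Fintype ι] [DecidableEq ι] [Zero M]
    [DecidableEq M] {x : ι → M} {i j : ι} (hi : x i ≠ 0) (hj : x j ≠ 0) (a : M) :
    (univ.filter fun v => update (update x i a) j 0 v ≠ 0).card
      < (univ.filter fun v => x v ≠ 0).card := by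
  refine (card_le_card fun v hv => ?_).trans_lt
    (card_erase_lt_of_mem (mem_filter.2 ⟨mem_univ j, hj⟩))
  have hv := (mem_filter.1 hv).2
  simp only [update_apply] at hv
  split_ifs at hv with hvj hvi
  · exact absurd rfl hv
  · exact mem_erase.2 ⟨hvj, mem_filter.2 ⟨mem_univ v, hvi ▸ hi⟩⟩
  · exact mem_erase.2 ⟨hvj, mem_filter.2 ⟨mem_univ v, hv⟩⟩

/-- For a left-compressed `G` with optimal weighting `x` of minimal support: if
`E_{i\j} = ∅` for supported `i < j`, then `x_i = x_j`. -/
theorem weight_eq_of_empty_diff {n r : ℕ} (E : Finset (Finset (Fin n)))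
    (hE : ∀ e ∈ E, e.card = r) (hlc : LeftCompressed E)
    (x : Fin n → ℝ) (hx : IsLegal x) (hopt : lagEval E x = lagrangian E)
    (hmin : ∀ y : Fin n → ℝ, IsLegal y →
      (univ.filter (fun i => y i ≠ 0)).card < (univ.filter (fun i => x i ≠ 0)).card →
      lagEval E y < lagrangian E) :
    ∀ i j : Fin n, i < j → x i ≠ 0 → x j ≠ 0 →
      (univ.powersetCard (r - 1)).filter
        (fun A => i ∉ A ∧ j ∉ A ∧ insert i A ∈ E ∧ insert j A ∉ E) = ∅ →
      x i = x j := by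
  intro i j hij hxi hxj hempty
  obtain ⟨P, Q, R, hP, hL⟩ := exists_lagEval_update_update_eq E hx.1 hij.ne
    (insert_mem_iff_of_diff_eq_empty hE hlc hij hempty)
  have hLx : lagEval E x = x i * x j * P + (x i + x j) * Q + R := by
    simpa using hL (x i) (x j)
  have hxi₀ := hx.1 i
  have hxj₀ := hx.1 j
  rcases hP.eq_or_lt with rfl | hP
  · have hlt := hmin _ (isLegal_update_update hx hij.ne (by positivity) le_rfl (add_zero _))
      (card_support_update_update_zero_lt hxi hxj (x i + x j))
    rw [hL, ← hopt, hLx] at hlt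
    linarith
  · have hle := lagEval_le_lagrangian E (isLegal_update_update hx hij.ne
      (a := (x i + x j) / 2) (b := (x i + x j) / 2) (by positivity) (by positivity) (by ring))
    rw [hL, ← hopt, hLx] at hle
    have hsq : (x i - x j) ^ 2 ≤ 0 := nonpos_of_mul_nonpos_left (by linarith) hP
    nlinarith [sq_nonneg (x i - x j)]
end

section
/- Let t ≥ r+2 and let G3 = [t]^(r) minus the four r-sets (t−r+1)···t, (t−r)(t−r+2)···t, (t−r)(t−r+1)(t−r+3)···t, (t−r)(t−r+1)(t−r+2)(t−r+4)···t. Let x' be an optimal weighting for G3 with x'_1 ≥ ··· ≥ x'_t > 0; write a' = x'_1 (common value of x'_1,...,x'_{t−r−1}) and b' = x'_{t−r} (common value of x'_{t−r},...,x'_{t−r+3}). Then a' ≤ 2b'. -/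
open Finset

/-- The evaluation of the Lagrangian polynomial of a hypergraph on ℕ at a weighting `x`. -/
noncomputable def lagEvalN (E : Finset (Finset ℕ)) (x : ℕ → ℝ) : ℝ :=
  ∑ e ∈ E, ∏ i ∈ e, x i

/-- A legal weighting on ℕ: nonnegative, finitely supported, summing to 1. -/
def IsLegalN (x : ℕ → ℝ) : Prop :=
  (∀ i, 0 ≤ x i) ∧ ∃ s : Finset ℕ, (∀ i ∉ s, x i = 0) ∧ ∑ i ∈ s, x i = 1

/-- The Lagrangian of a hypergraph on ℕ. -/
noncomputable def lagrangianN (E : Finset (Finset ℕ)) : ℝ :=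
  sSup {v | ∃ x, IsLegalN x ∧ lagEvalN E x = v}

/-!
Write `n = t - r`. Shifting a small weight `ε` from vertex `1` to vertex `n` keeps the
weighting legal, so at an optimum it cannot increase the Lagrangian; expanding to first order
gives `(x₁ - xₙ) Q ≤ N₁ - Nₙ`, where `Q` is the weight of the link of the pair `{1, n}` and
`Nᵢ` the weight of the link of `i` in the edges missing the other vertex. In the complete
`r`-graph `N₁ = Nₙ`, so `N₁ - Nₙ` is the weight of the removed edges through `n`, namely
`(x_{n+2} x_{n+3} + x_{n+1} x_{n+3} + x_{n+1} x_{n+2}) p` with `p = ∏_{v ≥ n+4} x_v`.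
The edges `{1, n, n+k} ∪ [n+4, t]`, `k = 1, 2, 3`, give `Q ≥ (x_{n+1} + x_{n+2} + x_{n+3}) p`,
hence `N₁ - Nₙ ≤ xₙ Q` by monotonicity, and so `x₁ - xₙ ≤ xₙ`.
-/

open Filter Topology

/-- `linkEvalN E i j x + x j * pairLinkEvalN E i j x` is the partial derivative of
`lagEvalN E` in the variable `x i`. -/
noncomputable def linkEvalN (E : Finset (Finset ℕ)) (i j : ℕ) (x : ℕ → ℝ) : ℝ :=
  ∑ e ∈ E with i ∈ e ∧ j ∉ e, ∏ v ∈ e.erase i, x v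

noncomputable def pairLinkEvalN (E : Finset (Finset ℕ)) (i j : ℕ) (x : ℕ → ℝ) : ℝ :=
  ∑ e ∈ E with i ∈ e ∧ j ∈ e, ∏ v ∈ (e.erase i).erase j, x v

lemma IsLegalN.le_one {x : ℕ → ℝ} (hx : IsLegalN x) (i : ℕ) : x i ≤ 1 := by
  obtain ⟨hx0, s, hs0, hs1⟩ := hx
  by_cases hi : i ∈ s
  · exact hs1 ▸ single_le_sum (fun j _ => hx0 j) hi
  · simp [hs0 i hi]

lemma lagEvalN_le_lagrangianN (E : Finset (Finset ℕ)) {x : ℕ → ℝ} (hx : IsLegalN x) :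
    lagEvalN E x ≤ lagrangianN E := by
  refine le_csSup ⟨#E, ?_⟩ ⟨x, hx, rfl⟩
  rintro _ ⟨y, hy, rfl⟩
  calc lagEvalN E y ≤ ∑ _e ∈ E, (1 : ℝ) :=
        sum_le_sum fun e _ => prod_le_one (fun i _ => hy.1 i) fun i _ => hy.le_one i
    _ = #E := by simp

lemma IsLegalN.shift {x : ℕ → ℝ} (hx : IsLegalN x) (i j : ℕ) {ε : ℝ} (hε : 0 ≤ ε)
    (hεi : ε ≤ x i) :
    IsLegalN fun v => x v + (if v = j then ε else 0) - (if v = i then ε else 0) := by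
  obtain ⟨hx0, s, hs0, hs1⟩ := hx
  refine ⟨fun v => ?_, insert i (insert j s), fun v hv => ?_, ?_⟩
  · have := hx0 v
    dsimp only
    split_ifs with hvj hvi <;> subst_vars <;> linarith
  · simp only [mem_insert, not_or] at hv
    simp [hv.1, hv.2.1, hs0 v hv.2.2]
  · have hsum : ∑ v ∈ insert i (insert j s), x v = 1 :=
      hs1 ▸ (sum_subset (by intro v; simp +contextual) fun v _ hv => hs0 v hv).symm
    simp [sum_add_distrib, sum_sub_distrib, hsum]

lemma lagEvalN_eq_of_eqOn_compl_pair (E : Finset (Finset ℕ)) {x y : ℕ → ℝ} {i j : ℕ}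
    (hij : i ≠ j) (hy : ∀ v, v ≠ i → v ≠ j → y v = x v) :
    lagEvalN E y = lagEvalN {e ∈ E | i ∉ e ∧ j ∉ e} x + y i * linkEvalN E i j x
      + y j * linkEvalN E j i x + y i * y j * pairLinkEvalN E i j x := by
  have agree : ∀ s : Finset ℕ, i ∉ s → j ∉ s → ∏ v ∈ s, y v = ∏ v ∈ s, x v :=
    fun s hi hj => prod_congr rfl fun v hv =>
      hy v (ne_of_mem_of_not_mem hv hi) (ne_of_mem_of_not_mem hv hj)
  simp only [lagEvalN, linkEvalN, pairLinkEvalN, sum_filter, mul_sum, ← sum_add_distrib]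
  refine sum_congr rfl fun e _ => ?_
  by_cases hi : i ∈ e <;> by_cases hj : j ∈ e
  · have hj' : j ∈ e.erase i := mem_erase.2 ⟨hij.symm, hj⟩
    rw [← mul_prod_erase e y hi, ← mul_prod_erase _ y hj',
      agree _ (fun h => (mem_erase.1 (mem_of_mem_erase h)).1 rfl) (notMem_erase j _)]
    simp [hi, hj, mul_assoc]
  · rw [← mul_prod_erase e y hi, agree _ (notMem_erase i e) fun h => hj (mem_of_mem_erase h)]
    simp [hi, hj]
  · rw [← mul_prod_erase e y hj, agree _ (fun h => hi (mem_of_mem_erase h)) (notMem_erase j e)]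
    simp [hi, hj]
  · simp [hi, hj, agree e hi hj]

lemma nonpos_of_forall_le_mul {a b c : ℝ} (hc : 0 < c) (h : ∀ ε, 0 < ε → ε ≤ c → a ≤ ε * b) :
    a ≤ 0 := by
  have hlim : Tendsto (fun ε : ℝ => ε * b) (𝓝[>] 0) (𝓝 0) := by
    simpa using (tendsto_id.mul_const b).mono_left (nhdsWithin_le_nhds (a := (0 : ℝ)))
  exact ge_of_tendsto hlim <| by
    filter_upwards [Ioc_mem_nhdsGT hc] with ε hε using h ε hε.1 hε.2

/-- First-order optimality condition for moving weight from `i` to `j`. -/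
lemma mul_pairLinkEvalN_le_of_lagEvalN_eq {E : Finset (Finset ℕ)} {x : ℕ → ℝ}
    (hx : IsLegalN x) (hopt : lagEvalN E x = lagrangianN E) {i j : ℕ} (hij : i ≠ j)
    (hi : 0 < x i) :
    (x i - x j) * pairLinkEvalN E i j x ≤ linkEvalN E i j x - linkEvalN E j i x := by
  rw [← sub_nonpos]
  refine nonpos_of_forall_le_mul (b := pairLinkEvalN E i j x) hi fun ε hε hεi => ?_
  have hle := lagEvalN_le_lagrangianN E (hx.shift i j hε.le hεi)
  rw [← hopt, lagEvalN_eq_of_eqOn_compl_pair E hij (x := x) (fun v hvi hvj => by simp [hvi, hvj]),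
    lagEvalN_eq_of_eqOn_compl_pair E hij (x := x) (y := x) fun _ _ _ => rfl] at hle
  simp only [if_neg hij, if_neg hij.symm, if_pos] at hle
  nlinarith

lemma insert_erase_mem_powersetCard {S e : Finset ℕ} {r i j : ℕ} (he : e ∈ S.powersetCard r)
    (hie : i ∈ e) (hj : j ∈ S) (hje : j ∉ e) : insert j (e.erase i) ∈ S.powersetCard r := by
  rw [mem_powersetCard] at he ⊢
  refine ⟨insert_subset hj ((erase_subset i e).trans he.1), ?_⟩
  rw [card_insert_of_notMem fun h => hje (mem_of_mem_erase h), card_erase_add_one hie, he.2]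

lemma linkEvalN_powersetCard_comm (S : Finset ℕ) (r : ℕ) {i j : ℕ} (hi : i ∈ S) (hj : j ∈ S)
    (x : ℕ → ℝ) : linkEvalN (S.powersetCard r) i j x = linkEvalN (S.powersetCard r) j i x := by
  refine sum_nbij' (fun e => insert j (e.erase i)) (fun e => insert i (e.erase j)) ?_ ?_ ?_ ?_ ?_
  all_goals simp only [mem_filter]
  · rintro e ⟨he, hie, hje⟩
    exact ⟨insert_erase_mem_powersetCard he hie hj hje, mem_insert_self j _,
      fun h => (mem_insert.1 h).elim (fun h => hje (h ▸ hie)) fun h => (mem_erase.1 h).1 rfl⟩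
  · rintro e ⟨he, hje, hie⟩
    exact ⟨insert_erase_mem_powersetCard he hje hi hie, mem_insert_self i _,
      fun h => (mem_insert.1 h).elim (fun h => hie (h ▸ hje)) fun h => (mem_erase.1 h).1 rfl⟩
  · rintro e ⟨-, hie, hje⟩
    rw [erase_insert fun h => hje (mem_of_mem_erase h), insert_erase hie]
  · rintro e ⟨-, hje, hie⟩
    rw [erase_insert fun h => hie (mem_of_mem_erase h), insert_erase hje]
  · rintro e ⟨-, -, hje⟩
    rw [erase_insert fun h => hje (mem_of_mem_erase h)]

lemma linkEvalN_sdiff {E R : Finset (Finset ℕ)} (h : R ⊆ E) (i j : ℕ) (x : ℕ → ℝ) :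
    linkEvalN (E \ R) i j x = linkEvalN E i j x - linkEvalN R i j x := by
  simp only [linkEvalN, sum_filter]
  exact sum_sdiff_eq_sub h

def G3Removed (t r : ℕ) : Finset (Finset ℕ) :=
  {Finset.Icc (t - r + 1) t,
   insert (t - r) (Finset.Icc (t - r + 2) t),
   insert (t - r) (insert (t - r + 1) (Finset.Icc (t - r + 3) t)),
   insert (t - r) (insert (t - r + 1) (insert (t - r + 2) (Finset.Icc (t - r + 4) t)))}

def G3 (t r : ℕ) : Finset (Finset ℕ) :=
  (Icc 1 t).powersetCard r \ G3Removed t r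

section G3

variable {t r : ℕ}

lemma G3Removed_subset_powersetCard (hr : 3 ≤ r) (ht : r + 2 ≤ t) :
    G3Removed t r ⊆ (Icc 1 t).powersetCard r := by
  intro e he
  simp only [G3Removed, mem_insert, mem_singleton] at he
  rw [mem_powersetCard]
  rcases he with rfl | rfl | rfl | rfl <;>
    exact ⟨fun v hv => by simp at hv ⊢; omega, by simp [card_insert_of_notMem]; omega⟩

lemma one_notMem_of_mem_G3Removed (ht : r + 2 ≤ t) {e : Finset ℕ} (he : e ∈ G3Removed t r) :
    1 ∉ e := by
  simp only [G3Removed, mem_insert, mem_singleton] at he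
  rcases he with rfl | rfl | rfl | rfl <;> simp <;> omega

lemma linkEvalN_G3Removed_one (ht : r + 2 ≤ t) (x : ℕ → ℝ) :
    linkEvalN (G3Removed t r) 1 (t - r) x = 0 :=
  sum_eq_zero fun _e he =>
    absurd (mem_filter.1 he).2.1 (one_notMem_of_mem_G3Removed ht (mem_filter.1 he).1)

lemma linkEvalN_G3Removed (hr : 3 ≤ r) (ht : r + 2 ≤ t) (x : ℕ → ℝ) :
    linkEvalN (G3Removed t r) (t - r) 1 x =
      (x (t - r + 2) * x (t - r + 3) + x (t - r + 1) * x (t - r + 3)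
        + x (t - r + 1) * x (t - r + 2)) * ∏ v ∈ Icc (t - r + 4) t, x v := by
  rw [linkEvalN, G3Removed]
  set n := t - r with hn
  have h2 : Icc (n + 2) t = insert (n + 2) (Icc (n + 3) t) := by ext; simp; omega
  have h3 : Icc (n + 3) t = insert (n + 3) (Icc (n + 4) t) := by ext; simp; omega
  have hF2 : insert n (Icc (n + 2) t) ∉
      ({insert n (insert (n + 1) (Icc (n + 3) t)),
        insert n (insert (n + 1) (insert (n + 2) (Icc (n + 4) t)))} : Finset (Finset ℕ)) := by
    simp only [mem_insert, mem_singleton, not_or]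
    constructor <;> exact (ne_of_mem_of_not_mem' (a := n + 1) (by simp) (by simp)).symm
  have hF3 : insert n (insert (n + 1) (Icc (n + 3) t)) ≠
      insert n (insert (n + 1) (insert (n + 2) (Icc (n + 4) t))) :=
    (ne_of_mem_of_not_mem' (a := n + 2) (by simp) (by simp)).symm
  rw [filter_insert, if_neg (by simp), filter_insert, if_pos (by simp; omega),
    filter_insert, if_pos (by simp; omega), filter_singleton, if_pos (by simp; omega),
    sum_insert hF2, sum_pair hF3, erase_insert (by simp), erase_insert (by simp),
    erase_insert (by simp), h2, h3]
  simp [prod_insert]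
  ring

lemma pairLinkEvalN_G3_ge (hr : 3 ≤ r) (ht : r + 2 ≤ t) {x : ℕ → ℝ} (hx : ∀ i, 0 ≤ x i) :
    (x (t - r + 1) + x (t - r + 2) + x (t - r + 3)) * ∏ v ∈ Icc (t - r + 4) t, x v ≤
      pairLinkEvalN (G3 t r) 1 (t - r) x := by
  rw [pairLinkEvalN]
  set n := t - r with hn
  let edge : ℕ → Finset ℕ := fun k => insert 1 (insert n (insert (n + 1 + k) (Icc (n + 4) t)))
  have hedge : ∀ k ∈ range 3, edge k ∈ {e ∈ G3 t r | 1 ∈ e ∧ n ∈ e} := by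
    intro k hk
    rw [mem_range] at hk
    refine mem_filter.2 ⟨mem_sdiff.2 ⟨mem_powersetCard.2 ⟨fun v hv => ?_, ?_⟩,
      fun h => one_notMem_of_mem_G3Removed ht h (by simp [edge])⟩, by simp [edge]⟩
    · simp [edge] at hv ⊢; omega
    · rw [card_insert_of_notMem (by simp; omega), card_insert_of_notMem (by simp; omega),
        card_insert_of_notMem (by simp; omega), Nat.card_Icc]
      omega
  have hinj : Set.InjOn edge (range 3) := by
    intro k hk k' hk' h
    have : n + 1 + k ∈ edge k' := h ▸ by simp [edge]
    simp [edge] at this hk hk'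
    omega
  have hprod : ∀ k ∈ range 3, ∏ v ∈ ((edge k).erase 1).erase n, x v =
      x (n + 1 + k) * ∏ v ∈ Icc (n + 4) t, x v := by
    intro k hk
    rw [mem_range] at hk
    rw [erase_insert (by simp; omega), erase_insert (by simp; omega), prod_insert (by simp; omega)]
  calc (x (n + 1) + x (n + 2) + x (n + 3)) * ∏ v ∈ Icc (n + 4) t, x v
      = ∑ k ∈ range 3, ∏ v ∈ ((edge k).erase 1).erase n, x v := by
        rw [sum_congr rfl hprod]
        simp only [sum_range_succ, sum_range_zero]
        ring_nf
    _ = ∑ e ∈ (range 3).image edge, ∏ v ∈ (e.erase 1).erase n, x v := by rw [sum_image hinj]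
    _ ≤ _ := sum_le_sum_of_subset_of_nonneg (image_subset_iff.2 hedge) fun _ _ _ =>
        prod_nonneg fun v _ => hx v

lemma pairLinkEvalN_G3_pos (hr : 3 ≤ r) (ht : r + 2 ≤ t) {x : ℕ → ℝ} (hx : ∀ i, 0 ≤ x i)
    (hpos : ∀ i ∈ Icc 1 t, 0 < x i) : 0 < pairLinkEvalN (G3 t r) 1 (t - r) x := by
  have hp : 0 < ∏ v ∈ Icc (t - r + 4) t, x v :=
    prod_pos fun v hv => hpos v (by simp only [mem_Icc] at hv ⊢; omega)
  have := hpos (t - r + 1) (mem_Icc.2 ⟨by omega, by omega⟩)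
  have := hpos (t - r + 2) (mem_Icc.2 ⟨by omega, by omega⟩)
  have := hpos (t - r + 3) (mem_Icc.2 ⟨by omega, by omega⟩)
  exact lt_of_lt_of_le (by positivity) (pairLinkEvalN_G3_ge hr ht hx)

lemma linkEvalN_G3Removed_le (hr : 3 ≤ r) (ht : r + 2 ≤ t) {x : ℕ → ℝ} (hx : ∀ i, 0 ≤ x i)
    (hanti : ∀ i j, 1 ≤ i → i ≤ j → j ≤ t → x j ≤ x i) :
    linkEvalN (G3Removed t r) (t - r) 1 x ≤ x (t - r) * pairLinkEvalN (G3 t r) 1 (t - r) x := by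
  have hp : 0 ≤ ∏ v ∈ Icc (t - r + 4) t, x v := prod_nonneg fun v _ => hx v
  have h1 := hanti (t - r) (t - r + 1) (by omega) (by omega) (by omega)
  have h2 := hanti (t - r) (t - r + 2) (by omega) (by omega) (by omega)
  have h3 := hanti (t - r) (t - r + 3) (by omega) (by omega) (by omega)
  rw [linkEvalN_G3Removed hr ht]
  calc _ ≤ x (t - r) * (x (t - r + 1) + x (t - r + 2) + x (t - r + 3))
        * ∏ v ∈ Icc (t - r + 4) t, x v := by
        gcongr
        linarith [mul_le_mul_of_nonneg_right h2 (hx (t - r + 3)),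
          mul_le_mul_of_nonneg_left h3 (hx (t - r + 1)),
          mul_le_mul_of_nonneg_right h1 (hx (t - r + 2))]
    _ ≤ _ := by
        rw [mul_assoc]
        exact mul_le_mul_of_nonneg_left (pairLinkEvalN_G3_ge hr ht hx) (hx _)

lemma linkEvalN_G3_sub (hr : 3 ≤ r) (ht : r + 2 ≤ t) (x : ℕ → ℝ) :
    linkEvalN (G3 t r) 1 (t - r) x - linkEvalN (G3 t r) (t - r) 1 x =
      linkEvalN (G3Removed t r) (t - r) 1 x := by
  have hsub := G3Removed_subset_powersetCard hr ht
  rw [G3, linkEvalN_sdiff hsub, linkEvalN_sdiff hsub,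
    linkEvalN_powersetCard_comm _ r (mem_Icc.2 ⟨le_rfl, by omega⟩) (mem_Icc.2 ⟨by omega, by omega⟩),
    linkEvalN_G3Removed_one ht]
  ring

end G3

theorem G3_first_weight_le_two_mul_general {t r : ℕ} (hr : 3 ≤ r) (ht : r + 2 ≤ t)
    (x : ℕ → ℝ) (hx : IsLegalN x)
    (hpos : ∀ i ∈ Finset.Icc 1 t, 0 < x i)
    (hanti : ∀ i j, 1 ≤ i → i ≤ j → j ≤ t → x j ≤ x i)
    (hopt : lagEvalN ((Finset.Icc 1 t).powersetCard r \
        {Finset.Icc (t - r + 1) t,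
         insert (t - r) (Finset.Icc (t - r + 2) t),
         insert (t - r) (insert (t - r + 1) (Finset.Icc (t - r + 3) t)),
         insert (t - r) (insert (t - r + 1) (insert (t - r + 2) (Finset.Icc (t - r + 4) t)))}) x
      = lagrangianN ((Finset.Icc 1 t).powersetCard r \
        {Finset.Icc (t - r + 1) t,
         insert (t - r) (Finset.Icc (t - r + 2) t),
         insert (t - r) (insert (t - r + 1) (Finset.Icc (t - r + 3) t)),
         insert (t - r) (insert (t - r + 1) (insert (t - r + 2) (Finset.Icc (t - r + 4) t)))})) :
    x 1 ≤ 2 * x (t - r) := by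
  have hfirst := mul_pairLinkEvalN_le_of_lagEvalN_eq (E := G3 t r) hx hopt (by omega : 1 ≠ t - r)
    (hpos 1 (mem_Icc.2 ⟨le_rfl, by omega⟩))
  rw [linkEvalN_G3_sub hr ht] at hfirst
  have hrem := linkEvalN_G3Removed_le hr ht hx.1 hanti
  have hQ := pairLinkEvalN_G3_pos hr ht hx.1 hpos
  exact le_of_mul_le_mul_right (by linarith) hQ

/-- For `G3 = [t]^(r)` minus the four indicated `r`-sets, any fully supported,
nonincreasing optimal weighting `x'` satisfies `a' ≤ 2b'`, i.e. `x'_1 ≤ 2·x'_{t−r}`. -/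
theorem G3_first_weight_le_two_mul {t r : ℕ} (hr : 3 ≤ r) (ht : r + 2 ≤ t)
    (x : ℕ → ℝ) (hx : IsLegalN x) (hsupp : ∀ i, x i ≠ 0 → i ∈ Finset.Icc 1 t)
    (hpos : ∀ i ∈ Finset.Icc 1 t, 0 < x i)
    (hanti : ∀ i j, 1 ≤ i → i ≤ j → j ≤ t → x j ≤ x i)
    (hopt : lagEvalN ((Finset.Icc 1 t).powersetCard r \
        {Finset.Icc (t - r + 1) t,
         insert (t - r) (Finset.Icc (t - r + 2) t),
         insert (t - r) (insert (t - r + 1) (Finset.Icc (t - r + 3) t)),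
         insert (t - r) (insert (t - r + 1) (insert (t - r + 2) (Finset.Icc (t - r + 4) t)))}) x
      = lagrangianN ((Finset.Icc 1 t).powersetCard r \
        {Finset.Icc (t - r + 1) t,
         insert (t - r) (Finset.Icc (t - r + 2) t),
         insert (t - r) (insert (t - r + 1) (Finset.Icc (t - r + 3) t)),
         insert (t - r) (insert (t - r + 1) (insert (t - r + 2) (Finset.Icc (t - r + 4) t)))})) :
    x 1 ≤ 2 * x (t - r) :=
  G3_first_weight_le_two_mul_general hr ht x hx hpos hanti hopt
end
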